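/- Let w be a weight, f ≥ 0, and L the stopping family as above (expectations E^w_L f increase geometrically by factor 4 along decreasing chains of stopping cubes). Then Σ_{L ∈ L} (E^w_L f)^p w(L) ≤ C_p ‖f‖_{L^p(w dm)}^p for 1 < p < ∞, with C_p independent of w. -/

import Mathlib

open MeasureTheory
open scoped ENNReal Classical

/-- The dyadic cube of sidelength `2^k` at position `x`. -/
def dyadicCube (n : ℕ) (k : ℤ) (x : Fin n → ℤ) : Set (Fin n → ℝ) :=
  {y | ∀ i, (x i : ℝ) * 2 ^ k ≤ y i ∧ y i < ((x i : ℝ) + 1) * 2 ^ k}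

/-- The weighted average `E^w_Q f = w(Q)⁻¹ ∫_Q f w dm`. -/
noncomputable def wAvg {n : ℕ} (w f : (Fin n → ℝ) → ℝ≥0∞) (Q : Set (Fin n → ℝ)) : ℝ≥0∞ :=
  (∫⁻ y in Q, w y)⁻¹ * ∫⁻ y in Q, f y * w y

/-- The dyadic weighted maximal function `M_w f`. -/
noncomputable def dyadicMaximal {n : ℕ} (w f : (Fin n → ℝ) → ℝ≥0∞)
    (y : Fin n → ℝ) : ℝ≥0∞ :=
  ⨆ (k : ℤ) (x : Fin n → ℤ) (_ : y ∈ dyadicCube n k x), wAvg w f (dyadicCube n k x)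

/-- The dyadic cube indexed by a pair `(k, x)`. -/
def dyC {n : ℕ} (Q : ℤ × (Fin n → ℤ)) : Set (Fin n → ℝ) := dyadicCube n Q.1 Q.2

/-- The corona/stopping family: `L₀ = {Q₀}` and `L_{i+1}` consists of the maximal
dyadic subcubes `Q` of cubes `L ∈ L_i` with `E^w_Q f > 4 E^w_L f`. -/
def isStopping {n : ℕ} (w f : (Fin n → ℝ) → ℝ≥0∞) (Q₀ : ℤ × (Fin n → ℤ)) :
    ℕ → ℤ × (Fin n → ℤ) → Prop
  | 0, Q => Q = Q₀
  | i + 1, Q => ∃ L, isStopping w f Q₀ i L ∧ dyC Q ⊆ dyC L ∧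
      4 * wAvg w f (dyC L) < wAvg w f (dyC Q) ∧
      ∀ Q' : ℤ × (Fin n → ℤ), dyC Q ⊆ dyC Q' → dyC Q' ⊆ dyC L →
        4 * wAvg w f (dyC L) < wAvg w f (dyC Q') → dyC Q' = dyC Q

/-!
Write `ν = w dm`, `a_L = E^w_L f` and `T = Σ_L a_L^p ν(L)`. Through any point the stopping cubes
form a chain along which `a_L` grows at least by the factor `4`, so `Φ = Σ_{L ∋ x} a_L^(p-1)` is
bounded by a geometric series: `Φ ≤ c D^(1/q)` with `D = Σ_{L ∋ x} a_L^p`, and `∫ D dν = T`.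
Since `a_L^p ν(L) ≤ a_L^(p-1) ∫_L f dν`, Hölder gives `T ≤ ∫ f Φ dν ≤ c ‖f‖_{L^p(ν)} T^(1/q)`,
and as `T < ∞` (Jensen on each cube) this yields `T ≤ c^p ‖f‖_{L^p(ν)}^p`. The function `D^(1/p)`
plays the role of the weighted maximal function, whose `L^p(ν)` bound is thereby never needed.
-/

open scoped NNReal

section DyadicCubes

variable {n : ℕ}

lemma dyadicCube_eq_pi (k : ℤ) (x : Fin n → ℤ) :
    dyadicCube n k x = Set.univ.pi fun i => Set.Ico ((x i : ℝ) * 2 ^ k) ((x i + 1) * 2 ^ k) := by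
  ext y
  simp [dyadicCube]

lemma measurableSet_dyC (Q : ℤ × (Fin n → ℤ)) : MeasurableSet (dyC Q) := by
  rw [dyC, dyadicCube_eq_pi]
  exact MeasurableSet.univ_pi fun _ => measurableSet_Ico

lemma mem_dyadicCube_iff_floor {k : ℤ} {x : Fin n → ℤ} {y : Fin n → ℝ} :
    y ∈ dyadicCube n k x ↔ ∀ i, ⌊y i / 2 ^ k⌋ = x i := by
  have h2k : (0 : ℝ) < 2 ^ k := zpow_pos two_pos k
  simp only [dyadicCube, Set.mem_ofPred_eq, Int.floor_eq_iff, le_div_iff₀ h2k, div_lt_iff₀ h2k]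

lemma floor_div_two_zpow_of_le {k k' : ℤ} (h : k ≤ k') (t : ℝ) :
    ⌊t / 2 ^ k'⌋ = ⌊t / 2 ^ k⌋ / 2 ^ (k' - k).toNat := by
  have hk' : (2 : ℝ) ^ k' = 2 ^ k * ((2 ^ (k' - k).toNat : ℕ) : ℝ) := by
    rw [Nat.cast_pow, Nat.cast_ofNat, ← zpow_natCast, ← zpow_add₀ two_ne_zero]
    congr 1
    omega
  rw [hk', ← div_div, Int.floor_div_natCast]
  push_cast
  rfl

lemma dyadicCube_subset_of_le {k k' : ℤ} {x x' : Fin n → ℤ} (h : k ≤ k')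
    (hmeet : (dyadicCube n k x ∩ dyadicCube n k' x').Nonempty) :
    dyadicCube n k x ⊆ dyadicCube n k' x' := by
  obtain ⟨z, hz, hz'⟩ := hmeet
  intro y hy
  rw [mem_dyadicCube_iff_floor] at hz hz' hy ⊢
  intro i
  rw [floor_div_two_zpow_of_le h, hy i, ← hz i, ← floor_div_two_zpow_of_le h, hz' i]

lemma dyC_subset_or_subset {Q Q' : ℤ × (Fin n → ℤ)} (hmeet : (dyC Q ∩ dyC Q').Nonempty) :
    dyC Q ⊆ dyC Q' ∨ dyC Q' ⊆ dyC Q := by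
  rcases le_total Q.1 Q'.1 with h | h
  · exact Or.inl (dyadicCube_subset_of_le h hmeet)
  · exact Or.inr (dyadicCube_subset_of_le h (Set.inter_comm _ _ ▸ hmeet))

lemma dyC_injective (hn : 0 < n) : Function.Injective (dyC (n := n)) := by
  rintro ⟨k, x⟩ ⟨k', x'⟩ h
  have h2 : ∀ j : ℤ, (0 : ℝ) < 2 ^ j := zpow_pos two_pos
  have hends : ∀ i, (x i : ℝ) * 2 ^ k = x' i * 2 ^ k' ∧
      (x i + 1 : ℝ) * 2 ^ k = (x' i + 1) * 2 ^ k' := by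
    intro i
    have hne : ∀ j (z : Fin n → ℤ), (dyadicCube n j z).Nonempty := fun j z => by
      rw [dyadicCube_eq_pi, Set.univ_pi_nonempty_iff]
      exact fun i => Set.nonempty_Ico.2 (by nlinarith [h2 j])
    have hi := congrArg (Function.eval i '' ·) h
    simp only [dyC, dyadicCube_eq_pi] at hi hne
    rw [Set.eval_image_univ_pi (hne k x), Set.eval_image_univ_pi (hne k' x'),
      Set.Ico_eq_Ico_iff (Or.inl (by nlinarith [h2 k]))] at hi
    exact hi
  have hk : k = k' := by
    obtain ⟨hl, hr⟩ := hends ⟨0, hn⟩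
    exact zpow_right_injective₀ two_pos (by norm_num : (2 : ℝ) ≠ 1) (by linear_combination hr - hl)
  subst hk
  congr
  funext i
  exact_mod_cast mul_right_cancel₀ (h2 k).ne' (hends i).1

end DyadicCubes

lemma isStopping.eq_of_fin_zero {i : ℕ} {Q : ℤ × (Fin 0 → ℤ)} {w f : (Fin 0 → ℝ) → ℝ≥0∞}
    {Q₀ : ℤ × (Fin 0 → ℤ)} (hQ : isStopping w f Q₀ i Q) : Q = Q₀ := by
  cases i with
  | zero => exact hQ
  | succ i =>
    obtain ⟨L, -, -, hLQ, -⟩ := hQ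
    have hcube : dyC Q = dyC L := by ext y; simp [dyC, dyadicCube]
    rw [hcube] at hLQ
    exact absurd hLQ (not_lt.2 (le_mul_of_one_le_left' (by norm_num)))

section Stopping

variable {n : ℕ} {w f : (Fin n → ℝ) → ℝ≥0∞} {Q₀ : ℤ × (Fin n → ℤ)}

lemma isStopping.dyC_eq_of_mem {i : ℕ} {Q Q' : ℤ × (Fin n → ℤ)} (hQ : isStopping w f Q₀ i Q)
    (hQ' : isStopping w f Q₀ i Q') {y : Fin n → ℝ} (hy : y ∈ dyC Q) (hy' : y ∈ dyC Q') :
    dyC Q = dyC Q' := by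
  induction i generalizing Q Q' with
  | zero => rw [hQ, hQ']
  | succ i ih =>
    obtain ⟨L, hL, hQL, hLQ, hmax⟩ := hQ
    obtain ⟨L', hL', hQL', hLQ', hmax'⟩ := hQ'
    have hLL : dyC L = dyC L' := ih hL hL' (hQL hy) (hQL' hy')
    rcases dyC_subset_or_subset ⟨y, hy, hy'⟩ with h | h
    · exact (hmax Q' h (hLL ▸ hQL') (hLL ▸ hLQ')).symm
    · exact hmax' Q h (hLL ▸ hQL) (hLL ▸ hLQ)

lemma isStopping.four_mul_wAvg_lt {i i' : ℕ} {Q Q' : ℤ × (Fin n → ℤ)}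
    (hQ : isStopping w f Q₀ i Q) (hQ' : isStopping w f Q₀ i' Q') (hlt : i' < i)
    {y : Fin n → ℝ} (hy : y ∈ dyC Q) (hy' : y ∈ dyC Q') :
    4 * wAvg w f (dyC Q') < wAvg w f (dyC Q) := by
  induction i generalizing Q with
  | zero => omega
  | succ i ih =>
    obtain ⟨L, hL, hQL, hLQ, -⟩ := hQ
    rcases Nat.lt_succ_iff_lt_or_eq.mp hlt with hlt | rfl
    · calc 4 * wAvg w f (dyC Q') < wAvg w f (dyC L) := ih hL hlt (hQL hy)
        _ ≤ 4 * wAvg w f (dyC L) := le_mul_of_one_le_left' (by norm_num)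
        _ < wAvg w f (dyC Q) := hLQ
    · rwa [← hL.dyC_eq_of_mem hQ' (hQL hy) hy']

lemma isStopping.wAvg_separated {i i' : ℕ} {Q Q' : ℤ × (Fin n → ℤ)}
    (hQ : isStopping w f Q₀ i Q) (hQ' : isStopping w f Q₀ i' Q') (hne : Q ≠ Q')
    {y : Fin n → ℝ} (hy : y ∈ dyC Q) (hy' : y ∈ dyC Q') :
    4 * wAvg w f (dyC Q) < wAvg w f (dyC Q') ∨ 4 * wAvg w f (dyC Q') < wAvg w f (dyC Q) := by
  rcases lt_trichotomy i i' with h | rfl | h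
  · exact Or.inl (hQ'.four_mul_wAvg_lt hQ h hy' hy)
  · refine absurd ?_ hne
    rcases Nat.eq_zero_or_pos n with rfl | hn
    · rw [hQ.eq_of_fin_zero, hQ'.eq_of_fin_zero]
    · exact dyC_injective hn (hQ.dyC_eq_of_mem hQ' hy hy')
  · exact Or.inr (hQ.four_mul_wAvg_lt hQ' h hy hy')

end Stopping

namespace ENNReal

lemma one_add_mul_inv_one_sub (t : ℝ≥0∞) : 1 + t * (1 - t)⁻¹ = (1 - t)⁻¹ := by
  calc 1 + t * (1 - t)⁻¹ = t ^ 0 + ∑' n : ℕ, t ^ (n + 1) := by rw [pow_zero, tsum_geometric_add_one]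
    _ = (1 - t)⁻¹ := by rw [← tsum_eq_zero_add' ENNReal.summable, tsum_geometric]

lemma inv_one_sub_inv_rpow_ne_top {b : ℝ≥0} (hb : 1 < b) {r : ℝ} (hr : 0 < r) :
    (1 - (b : ℝ≥0∞)⁻¹ ^ r)⁻¹ ≠ ⊤ := by
  have hb' : (b : ℝ≥0∞)⁻¹ < 1 := ENNReal.inv_lt_one.2 (by exact_mod_cast hb)
  simpa [tsub_eq_zero_iff_le] using rpow_lt_one hb' hr

/-- Listed in decreasing order, the `k`-th value is at most `b⁻ᵏ B`; the constant is the sum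
`∑ₖ (b⁻¹ ^ r) ^ k` of the resulting geometric series. -/
lemma sum_rpow_le_of_separated {ι : Type*} {b : ℝ≥0} (hb : 1 < b) {r : ℝ} (hr : 0 < r)
    {U : Finset ι} {v : ι → ℝ≥0∞}
    (hsep : ∀ i ∈ U, ∀ j ∈ U, i ≠ j → b * v i < v j ∨ b * v j < v i)
    {B : ℝ≥0∞} (hB : ∀ i ∈ U, v i ≤ B) :
    ∑ i ∈ U, v i ^ r ≤ (1 - (b : ℝ≥0∞)⁻¹ ^ r)⁻¹ * B ^ r := by
  set c := (1 - (b : ℝ≥0∞)⁻¹ ^ r)⁻¹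
  induction U using Finset.strongInduction generalizing B with
  | _ U ih =>
    rcases U.eq_empty_or_nonempty with rfl | hU
    · simp
    obtain ⟨m, hm, hmax⟩ := U.exists_max_image v hU
    have hb1 : (1 : ℝ≥0∞) ≤ b := by exact_mod_cast hb.le
    have hsmall : ∀ i ∈ U.erase m, v i ≤ (b : ℝ≥0∞)⁻¹ * v m := by
      intro i hi
      obtain ⟨hne, hiU⟩ := Finset.mem_erase.1 hi
      rw [← ENNReal.mul_le_iff_le_inv (by simp [(zero_lt_one.trans hb).ne']) coe_ne_top]
      rcases hsep i hiU m hm hne with h | h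
      · exact h.le
      · exact absurd (h.trans_le ((hmax i hiU).trans (le_mul_of_one_le_left' hb1))) (lt_irrefl _)
    have hrest := ih (U.erase m) (Finset.erase_ssubset hm)
      (fun i hi j hj => hsep i (Finset.mem_of_mem_erase hi) j (Finset.mem_of_mem_erase hj)) hsmall
    calc ∑ i ∈ U, v i ^ r = v m ^ r + ∑ i ∈ U.erase m, v i ^ r := (Finset.add_sum_erase U _ hm).symm
      _ ≤ v m ^ r + c * ((b : ℝ≥0∞)⁻¹ * v m) ^ r := add_le_add_right hrest _
      _ = (1 + (b : ℝ≥0∞)⁻¹ ^ r * c) * v m ^ r := by rw [mul_rpow_of_nonneg _ _ hr.le]; ring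
      _ = c * v m ^ r := by rw [one_add_mul_inv_one_sub]
      _ ≤ c * B ^ r := by gcongr; exact hB m hm

lemma sum_rpow_sub_one_le_of_separated {ι : Type*} {b : ℝ≥0} (hb : 1 < b) {p : ℝ} (hp : 1 < p)
    {U : Finset ι} {v : ι → ℝ≥0∞}
    (hsep : ∀ i ∈ U, ∀ j ∈ U, i ≠ j → b * v i < v j ∨ b * v j < v i) :
    ∑ i ∈ U, v i ^ (p - 1) ≤
      (1 - (b : ℝ≥0∞)⁻¹ ^ (p - 1))⁻¹ * ((∑ i ∈ U, v i ^ p) ^ p⁻¹) ^ (p - 1) := by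
  refine sum_rpow_le_of_separated hb (by linarith) hsep fun i hi => ?_
  rw [le_rpow_inv_iff (by linarith)]
  exact Finset.single_le_sum (f := fun i => v i ^ p) (fun _ _ => zero_le) hi

lemma sum_indicator_rpow_sub_one_le_of_separated {α ι : Type*} {b : ℝ≥0} (hb : 1 < b) {p : ℝ}
    (hp : 1 < p) {S : Finset ι} {s : ι → Set α} {a : ι → ℝ≥0∞}
    (hsep : ∀ i ∈ S, ∀ j ∈ S, i ≠ j → ∀ x ∈ s i, x ∈ s j → b * a i < a j ∨ b * a j < a i)
    (x : α) :
    ∑ i ∈ S, (s i).indicator (fun _ => a i ^ (p - 1)) x ≤ (1 - (b : ℝ≥0∞)⁻¹ ^ (p - 1))⁻¹ *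
      ((∑ i ∈ S, (s i).indicator (fun _ => a i ^ p) x) ^ p⁻¹) ^ (p - 1) := by
  simp only [Set.indicator_apply, ← Finset.sum_filter]
  refine sum_rpow_sub_one_le_of_separated hb hp fun i hi j hj hij => ?_
  rw [Finset.mem_filter] at hi hj
  exact hsep i hi.1 j hj.1 hij x hi.2 hj.2

lemma le_rpow_of_le_mul_rpow {p q : ℝ} (hpq : p.HolderConjugate q) {T A : ℝ≥0∞} (hT : T ≠ ⊤)
    (h : T ≤ A * T ^ q⁻¹) : T ≤ A ^ p := by
  rcases eq_or_ne T 0 with rfl | hT0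
  · exact zero_le
  have hsplit : T ^ p⁻¹ * T ^ q⁻¹ = T := by
    rw [← rpow_add _ _ hT0 hT, hpq.inv_add_inv_eq_one, rpow_one]
  have hroot : T ^ p⁻¹ ≤ A :=
    (ENNReal.mul_le_mul_iff_left (rpow_pos (pos_iff_ne_zero.2 hT0) hT).ne'
      (rpow_ne_top_of_nonneg (inv_nonneg.2 hpq.symm.nonneg) hT)).1 (hsplit.trans_le h)
  calc T = (T ^ p⁻¹) ^ p := (rpow_inv_rpow hpq.ne_zero T).symm
    _ ≤ A ^ p := rpow_le_rpow hroot hpq.nonneg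

end ENNReal

section Averages

variable {α : Type*} [MeasurableSpace α] {μ : Measure α} {f : α → ℝ≥0∞}

lemma laverage_rpow_mul_measure_univ_le (hf : AEMeasurable f μ) {p : ℝ} (hp : 1 < p) :
    (⨍⁻ x, f x ∂μ) ^ p * μ Set.univ ≤ ∫⁻ x, f x ^ p ∂μ := by
  rcases eq_or_ne (μ Set.univ) 0 with h0 | h0
  · simp [h0]
  rcases eq_or_ne (μ Set.univ) ⊤ with htop | htop
  · simp [laverage_eq, htop, ENNReal.zero_rpow_of_pos (zero_lt_one.trans hp)]
  have hpq := Real.HolderConjugate.conjExponent hp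
  set ν := (μ Set.univ)⁻¹ • μ
  have hν : ν Set.univ = 1 := by
    simp [ν, ENNReal.inv_mul_cancel h0 htop]
  have hHolder := ENNReal.lintegral_mul_le_Lp_mul_Lq ν hpq (hf.smul_measure _)
    (aemeasurable_const (b := (1 : ℝ≥0∞)))
  simp only [Pi.mul_apply, mul_one, ENNReal.one_rpow, lintegral_const, hν, one_div] at hHolder
  calc (⨍⁻ x, f x ∂μ) ^ p * μ Set.univ ≤ (∫⁻ x, f x ^ p ∂ν) * μ Set.univ := by
        gcongr
        rw [laverage_eq', ← ENNReal.rpow_inv_rpow (zero_lt_one.trans hp).ne' (∫⁻ x, f x ^ p ∂ν)]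
        exact ENNReal.rpow_le_rpow hHolder (zero_le_one.trans hp.le)
    _ = ∫⁻ x, f x ^ p ∂μ := by
        rw [lintegral_smul_measure, smul_eq_mul, mul_comm, ← mul_assoc,
          ENNReal.mul_inv_cancel h0 htop, one_mul]

lemma setLAverage_rpow_mul_measure_le (hf : AEMeasurable f μ) {p : ℝ} (hp : 1 < p) (s : Set α) :
    (⨍⁻ x in s, f x ∂μ) ^ p * μ s ≤ ∫⁻ x in s, f x ^ p ∂μ := by
  simpa using laverage_rpow_mul_measure_univ_le hf.restrict hp

end Averages

section SeparatedAverages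

open ENNReal

variable {α ι : Type*} [MeasurableSpace α] {μ : Measure α} {f : α → ℝ≥0∞} {s : ι → Set α}
  {S : Finset ι} {p : ℝ}

lemma sum_setLAverage_rpow_mul_le_lintegral_mul (hf : AEMeasurable f μ)
    (hs : ∀ i, MeasurableSet (s i)) (hp : 1 ≤ p) :
    ∑ i ∈ S, (⨍⁻ x in s i, f x ∂μ) ^ p * μ (s i) ≤
      ∫⁻ x, f x * ∑ i ∈ S, (s i).indicator (fun _ => (⨍⁻ y in s i, f y ∂μ) ^ (p - 1)) x ∂μ := by
  have hΦ : ∀ x, f x * ∑ i ∈ S, (s i).indicator (fun _ => (⨍⁻ y in s i, f y ∂μ) ^ (p - 1)) x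
      = ∑ i ∈ S, (s i).indicator (fun x => (⨍⁻ y in s i, f y ∂μ) ^ (p - 1) * f x) x := by
    intro x
    rw [Finset.mul_sum]
    refine Finset.sum_congr rfl fun i _ => ?_
    by_cases hx : x ∈ s i <;> simp [hx, mul_comm]
  rw [lintegral_congr hΦ,
    lintegral_finsetSum' _ fun i _ => (hf.const_mul _).indicator (hs i)]
  gcongr with i
  set a := ⨍⁻ y in s i, f y ∂μ with ha
  have hpow : a ^ p = a ^ (p - 1) * a := by
    conv_lhs => rw [← sub_add_cancel p 1]
    rw [ENNReal.rpow_add_of_nonneg _ _ (by linarith) zero_le_one, ENNReal.rpow_one]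
  calc a ^ p * μ (s i) = a ^ (p - 1) * (μ (s i) * a) := by rw [hpow]; ring
    _ ≤ a ^ (p - 1) * ∫⁻ x in s i, f x ∂μ := by
        gcongr; rw [ha, setLAverage_eq]; exact ENNReal.mul_div_le
    _ ≤ ∫⁻ x, (s i).indicator (fun x => a ^ (p - 1) * f x) x ∂μ := by
        rw [lintegral_indicator (hs i)]; exact lintegral_const_mul_le _ _

theorem sum_setLAverage_rpow_mul_le_of_separated (hf : AEMeasurable f μ)
    (hs : ∀ i, MeasurableSet (s i)) (hp : 1 < p) {b : ℝ≥0} (hb : 1 < b)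
    (hsep : ∀ i ∈ S, ∀ j ∈ S, i ≠ j → ∀ x ∈ s i, x ∈ s j →
      b * ⨍⁻ y in s i, f y ∂μ < ⨍⁻ y in s j, f y ∂μ ∨
        b * ⨍⁻ y in s j, f y ∂μ < ⨍⁻ y in s i, f y ∂μ) :
    ∑ i ∈ S, (⨍⁻ x in s i, f x ∂μ) ^ p * μ (s i) ≤
      ((1 - (b : ℝ≥0∞)⁻¹ ^ (p - 1))⁻¹) ^ p * ∫⁻ x, f x ^ p ∂μ := by
  set a : ι → ℝ≥0∞ := fun i => ⨍⁻ y in s i, f y ∂μ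
  set c := (1 - (b : ℝ≥0∞)⁻¹ ^ (p - 1))⁻¹
  set T := ∑ i ∈ S, a i ^ p * μ (s i)
  set I := ∫⁻ x, f x ^ p ∂μ
  set D : α → ℝ≥0∞ := fun x => ∑ i ∈ S, (s i).indicator (fun _ => a i ^ p) x
  have hpq := Real.HolderConjugate.conjExponent hp
  set q := p.conjExponent
  have hc : c ≠ ⊤ := inv_one_sub_inv_rpow_ne_top hb (by linarith)
  rcases eq_or_ne I ⊤ with hI | hI
  · rw [hI, mul_top (rpow_pos (by simp [c]) (by simpa using hc)).ne']
    exact le_top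
  have hT : T ≠ ⊤ := ENNReal.sum_ne_top.2 fun i _ => ne_top_of_le_ne_top hI
    ((setLAverage_rpow_mul_measure_le hf hp (s i)).trans (setLIntegral_le_lintegral _ _))
  have hD : Measurable D :=
    Finset.measurable_sum _ fun i _ => measurable_const.indicator (hs i)
  have hDT : ∫⁻ x, D x ∂μ = T := by
    rw [lintegral_finsetSum _ fun i _ => measurable_const.indicator (hs i)]
    exact Finset.sum_congr rfl fun i _ => lintegral_indicator_const (hs i) _
  refine (le_rpow_of_le_mul_rpow (A := c * I ^ p⁻¹) hpq hT ?_).trans_eq ?_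
  · calc T ≤ ∫⁻ x, f x * ∑ i ∈ S, (s i).indicator (fun _ => a i ^ (p - 1)) x ∂μ :=
          sum_setLAverage_rpow_mul_le_lintegral_mul hf hs hp.le
      _ ≤ ∫⁻ x, c * (f x * (D x ^ p⁻¹) ^ (p - 1)) ∂μ := by
          refine lintegral_mono fun x => ?_
          rw [mul_left_comm]
          gcongr
          exact sum_indicator_rpow_sub_one_le_of_separated hb hp hsep x
      _ = c * ∫⁻ x, f x * (D x ^ p⁻¹) ^ (p - 1) ∂μ := lintegral_const_mul' _ _ hc
      _ ≤ c * (I ^ (1 / p) * (∫⁻ x, (D x ^ p⁻¹) ^ p ∂μ) ^ (1 / q)) := by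
          gcongr
          exact ENNReal.lintegral_mul_rpow_le_lintegral_rpow_mul_lintegral_rpow hpq hf
            (hD.pow_const _).aemeasurable
      _ = c * I ^ p⁻¹ * T ^ q⁻¹ := by
          simp only [rpow_inv_rpow hpq.ne_zero, hDT, one_div, mul_assoc]
  · rw [mul_rpow_of_nonneg _ _ hpq.nonneg, rpow_inv_rpow hpq.ne_zero]

end SeparatedAverages

section WeightedAverages

variable {n : ℕ} {w f : (Fin n → ℝ) → ℝ≥0∞}

lemma wAvg_eq_setLAverage_withDensity (hw : Measurable w) (hf : Measurable f)
    {s : Set (Fin n → ℝ)} (hs : MeasurableSet s) :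
    wAvg w f s = ⨍⁻ y in s, f y ∂(volume.withDensity w) := by
  rw [setLAverage_eq, withDensity_apply _ hs,
    setLIntegral_withDensity_eq_setLIntegral_mul _ hw hf hs, wAvg, div_eq_mul_inv, mul_comm]
  simp only [Pi.mul_apply, mul_comm (w _)]

end WeightedAverages

/-- `Σ_{L ∈ 𝓛} (E^w_L f)^p w(L) ≤ C_p ‖f‖_{L^p(w dm)}^p`, with `C_p` independent
of the weight `w`. -/
theorem stopping_sum_Lp_bound (p : ℝ) (hp : 1 < p) :
    ∃ C : ℝ≥0∞, 0 < C ∧ C ≠ ⊤ ∧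
      ∀ (n : ℕ) (w f : (Fin n → ℝ) → ℝ≥0∞), Measurable w → Measurable f →
        ∀ Q₀ : ℤ × (Fin n → ℤ),
          (∑' Q : ℤ × (Fin n → ℤ),
              if ∃ i, isStopping w f Q₀ i Q then
                (wAvg w f (dyC Q)) ^ p * ∫⁻ y in dyC Q, w y
              else 0) ≤
            C * ∫⁻ y, (f y) ^ p * w y := by
  have hc := ENNReal.inv_one_sub_inv_rpow_ne_top (b := 4) (by norm_num) (sub_pos.2 hp)
  refine ⟨_, ENNReal.rpow_pos (by simp) hc, ENNReal.rpow_ne_top_of_nonneg (by linarith) hc, ?_⟩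
  intro n w f hw hf Q₀
  have hwAvg (Q : ℤ × (Fin n → ℤ)) := wAvg_eq_setLAverage_withDensity hw hf (measurableSet_dyC Q)
  refine ENNReal.summable.tsum_le_of_sum_le fun S => ?_
  rw [← Finset.sum_filter]
  calc _ = ∑ Q ∈ S.filter (∃ i, isStopping w f Q₀ i ·),
        (⨍⁻ y in dyC Q, f y ∂(volume.withDensity w)) ^ p * volume.withDensity w (dyC Q) := by
        refine Finset.sum_congr rfl fun Q _ => ?_
        rw [hwAvg, withDensity_apply _ (measurableSet_dyC Q)]
    _ ≤ _ := by
        refine sum_setLAverage_rpow_mul_le_of_separated (b := 4) hf.aemeasurable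
          measurableSet_dyC hp (by norm_num) fun Q hQ Q' hQ' hne y hy hy' => ?_
        obtain ⟨i, hi⟩ := (Finset.mem_filter.1 hQ).2
        obtain ⟨i', hi'⟩ := (Finset.mem_filter.1 hQ').2
        simpa only [hwAvg, ENNReal.coe_ofNat] using hi.wAvg_separated hi' hne hy hy'
    _ = _ := by
        rw [lintegral_withDensity_eq_lintegral_mul _ hw (hf.pow_const p)]
        simp only [Pi.mul_apply, mul_comm (w _)]
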